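/- Let μ be a probability measure on ℝⁿ with a log-concave density f. Then μ({x : f(x) ≥ e^{−8n}·‖f‖}) ≥ 1 − 5^{−n}. -/

import Mathlib

open MeasureTheory ProbabilityTheory Real
open scoped Pointwise ENNReal

noncomputable def ent {n : ℕ} (f : EuclideanSpace ℝ (Fin n) → ℝ) : ℝ :=
  -∫ x, f x * Real.log (f x)

noncomputable def densSup {n : ℕ} (f : EuclideanSpace ℝ (Fin n) → ℝ) : ℝ :=
  (essSup (fun x => ENNReal.ofReal (f x)) volume).toReal

def HasDensity {Ω : Type*} [MeasurableSpace Ω] (P : Measure Ω) {n : ℕ}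
    (X : Ω → EuclideanSpace ℝ (Fin n)) (f : EuclideanSpace ℝ (Fin n) → ℝ) : Prop :=
  Measure.map X P = volume.withDensity (fun x => ENNReal.ofReal (f x))

def ConvexForm {n : ℕ} (f : EuclideanSpace ℝ (Fin n) → ℝ) (β : ℝ) : Prop :=
  ∃ (S : Set (EuclideanSpace ℝ (Fin n))) (V : EuclideanSpace ℝ (Fin n) → ℝ),
    IsOpen S ∧ Convex ℝ S ∧ ConvexOn ℝ S V ∧
    (∀ x ∈ S, 0 < V x) ∧ (∀ x ∈ S, f x = V x ^ (-β)) ∧ (∀ x ∉ S, f x = 0)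

def LogConcaveDensity {n : ℕ} (f : EuclideanSpace ℝ (Fin n) → ℝ) : Prop :=
  (∀ x, 0 ≤ f x) ∧
  ∀ x y : EuclideanSpace ℝ (Fin n), ∀ t : ℝ, 0 < t → t < 1 →
    f x ^ t * f y ^ (1 - t) ≤ f (t • x + (1 - t) • y)

def KConcave {n : ℕ} (μ : Measure (EuclideanSpace ℝ (Fin n))) (κ : ℝ) : Prop :=
  ∀ A B : Set (EuclideanSpace ℝ (Fin n)), MeasurableSet A → MeasurableSet B →
    0 < μ A → 0 < μ B → ∀ t : ℝ, 0 < t → t < 1 →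
      (t * (μ A).toReal ^ κ + (1 - t) * (μ B).toReal ^ κ) ^ (1/κ) ≤
        (μ (t • A + (1 - t) • B)).toReal

def IsConvexBody {n : ℕ} (A : Set (EuclideanSpace ℝ (Fin n))) : Prop :=
  Convex ℝ A ∧ IsCompact A ∧ (interior A).Nonempty

def IsUniformOn {Ω : Type*} [MeasurableSpace Ω] (P : Measure Ω) {n : ℕ}
    (X : Ω → EuclideanSpace ℝ (Fin n)) (A : Set (EuclideanSpace ℝ (Fin n))) : Prop :=
  Measure.map X P = (volume A)⁻¹ • volume.restrict A

/-
Pick `x₀` with `f x₀ > ‖f‖ / 2`. Log-concavity at the midpoint gives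
`√(f x) √(f x₀) ≤ f ((x + x₀) / 2)`, so wherever `f x < r` we have
`f x ≤ √(r / f x₀) · f ((x + x₀) / 2)`. Integrating, and using that `x ↦ (x + x₀) / 2` scales
volume by `2⁻ⁿ`, the mass of `{f < r}` is at most `2ⁿ √(r / f x₀) ≤ 2ⁿ √(2 e^{-8n}) ≤ 5⁻ⁿ`
for `r = e^{-8n} ‖f‖`.
-/

open MeasureTheory Real Set Module

theorem MeasureTheory.Measure.lintegral_comp_smul_add {E : Type*} [NormedAddCommGroup E]
    [NormedSpace ℝ E] [MeasurableSpace E] [BorelSpace E] [FiniteDimensional ℝ E]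
    (μ : Measure E) [μ.IsAddHaarMeasure] (G : E → ℝ≥0∞) {c : ℝ} (hc : c ≠ 0) (v : E) :
    ∫⁻ x, G (c • x + v) ∂μ = ENNReal.ofReal |(c ^ finrank ℝ E)⁻¹| * ∫⁻ x, G x ∂μ := by
  let e : E ≃ᵐ E := (Homeomorph.smulOfNeZero c hc).toMeasurableEquiv
  calc ∫⁻ x, G (c • x + v) ∂μ = ∫⁻ y, G (y + v) ∂(Measure.map e μ) :=
        (lintegral_map_equiv (fun y => G (y + v)) e).symm
    _ = ENNReal.ofReal |(c ^ finrank ℝ E)⁻¹| * ∫⁻ y, G (y + v) ∂μ := by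
        rw [show ⇑e = (c • ·) from rfl, Measure.map_addHaar_smul μ hc, lintegral_smul_measure,
          smul_eq_mul]
    _ = ENNReal.ofReal |(c ^ finrank ℝ E)⁻¹| * ∫⁻ x, G x ∂μ := by
        rw [lintegral_add_right_eq_self G v]

theorem exists_lt_of_lt_densSup {n : ℕ} {f : EuclideanSpace ℝ (Fin n) → ℝ} {c : ℝ} (hc : 0 ≤ c)
    (h : c < densSup f) : ∃ x, c < f x := by
  by_contra! hle
  refine h.not_ge (ENNReal.toReal_le_of_le_ofReal hc (essSup_le_of_ae_le _ ?_))
  exact ae_of_all _ fun x => ENNReal.ofReal_le_ofReal (hle x)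

theorem two_pow_mul_sqrt_two_mul_exp_le {n : ℕ} (hn : 1 ≤ n) :
    (2 : ℝ) ^ n * √(2 * exp (-(8 * n))) ≤ (1 / 5) ^ n := by
  have h256 : (256 : ℝ) ≤ exp 8 := by
    have : (2 : ℝ) ^ 8 ≤ exp 1 ^ 8 := by gcongr; linarith [add_one_le_exp (1 : ℝ)]
    rw [← exp_nat_mul] at this; norm_num at this ⊢; linarith
  have hsq : 2 * exp (-(8 * n)) ≤ ((1 / 10 : ℝ) ^ n) ^ 2 := by
    have h200 : 2 * (100 : ℝ) ^ n ≤ exp (8 * n) :=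
      calc 2 * (100 : ℝ) ^ n ≤ 2 ^ n * 100 ^ n := by
            gcongr; exact le_self_pow₀ one_le_two (by omega)
        _ = 200 ^ n := by rw [← mul_pow]; norm_num
        _ ≤ exp 8 ^ n := by gcongr; linarith
        _ = exp (8 * n) := by rw [← exp_nat_mul, mul_comm]
    calc 2 * exp (-(8 * n)) = 2 / exp (8 * n) := by rw [exp_neg, div_eq_mul_inv]
      _ ≤ 2 / (2 * 100 ^ n) := by gcongr
      _ = ((1 / 10 : ℝ) ^ n) ^ 2 := by
          field_simp; rw [← pow_mul, mul_comm n 2, pow_mul, ← mul_pow]; norm_num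
  calc (2 : ℝ) ^ n * √(2 * exp (-(8 * n))) ≤ 2 ^ n * (1 / 10) ^ n := by
        gcongr; exact sqrt_le_iff.mpr ⟨by positivity, hsq⟩
    _ = (1 / 5) ^ n := by rw [← mul_pow]; norm_num

namespace LogConcaveDensity

variable {n : ℕ} {f : EuclideanSpace ℝ (Fin n) → ℝ}

theorem sqrt_mul_sqrt_le (hf : LogConcaveDensity f) (x y : EuclideanSpace ℝ (Fin n)) :
    √(f x) * √(f y) ≤ f ((2 : ℝ)⁻¹ • x + (2 : ℝ)⁻¹ • y) := by
  have h := hf.2 x y 2⁻¹ (by norm_num) (by norm_num)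
  rw [show (1 : ℝ) - 2⁻¹ = 2⁻¹ by norm_num] at h
  rwa [sqrt_eq_rpow, sqrt_eq_rpow, one_div]

theorem convex_setOf_le (hf : LogConcaveDensity f) {r : ℝ} (hr : 0 ≤ r) :
    Convex ℝ {x | r ≤ f x} := by
  refine convex_iff_forall_pos.mpr fun x hx y hy a b ha hb hab => ?_
  obtain rfl : b = 1 - a := by linarith
  calc r = r ^ a * r ^ (1 - a) := by rw [← rpow_add' hr (by norm_num)]; norm_num
    _ ≤ f x ^ a * f y ^ (1 - a) :=
        mul_le_mul (rpow_le_rpow hr hx ha.le) (rpow_le_rpow hr hy (by linarith))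
          (by positivity) (rpow_nonneg (hf.1 x) _)
    _ ≤ f (a • x + (1 - a) • y) := hf.2 x y a ha (by linarith)

theorem le_sqrt_div_mul_midpoint (hf : LogConcaveDensity f) {x x₀ : EuclideanSpace ℝ (Fin n)}
    (hx₀ : 0 < f x₀) {r : ℝ} (hx : f x ≤ r) :
    f x ≤ √(r / f x₀) * f ((2 : ℝ)⁻¹ • x + (2 : ℝ)⁻¹ • x₀) := by
  have hs₀ : 0 < √(f x₀) := sqrt_pos.mpr hx₀
  calc f x = √(f x) * √(f x) := (mul_self_sqrt (hf.1 x)).symm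
    _ ≤ √r * √(f x) := by gcongr
    _ = √r / √(f x₀) * (√(f x) * √(f x₀)) := by field_simp
    _ ≤ √r / √(f x₀) * f ((2 : ℝ)⁻¹ • x + (2 : ℝ)⁻¹ • x₀) := by
        gcongr; exact hf.sqrt_mul_sqrt_le x x₀
    _ = √(r / f x₀) * f ((2 : ℝ)⁻¹ • x + (2 : ℝ)⁻¹ • x₀) := by rw [sqrt_div' r hx₀.le]

theorem withDensity_compl_setOf_le_le (hf : LogConcaveDensity f) {x₀ : EuclideanSpace ℝ (Fin n)}
    (hx₀ : 0 < f x₀) {r : ℝ} (hr : 0 ≤ r) :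
    volume.withDensity (fun x => ENNReal.ofReal (f x)) {x | r ≤ f x}ᶜ ≤
      ENNReal.ofReal (2 ^ n * √(r / f x₀)) * ∫⁻ x, ENNReal.ofReal (f x) := by
  set c := √(r / f x₀)
  have hlow : NullMeasurableSet {x | r ≤ f x}ᶜ volume :=
    ((hf.convex_setOf_le hr).nullMeasurableSet volume).compl
  calc volume.withDensity (fun x => ENNReal.ofReal (f x)) {x | r ≤ f x}ᶜ
      = ∫⁻ x in {x | r ≤ f x}ᶜ, ENNReal.ofReal (f x) := withDensity_apply' _ _
    _ ≤ ∫⁻ x in {x | r ≤ f x}ᶜ, ENNReal.ofReal (c * f ((2 : ℝ)⁻¹ • x + (2 : ℝ)⁻¹ • x₀)) :=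
        lintegral_mono_ae <| (ae_restrict_mem₀ hlow).mono fun x hx =>
          ENNReal.ofReal_le_ofReal (hf.le_sqrt_div_mul_midpoint hx₀ (le_of_not_ge hx))
    _ ≤ ∫⁻ x, ENNReal.ofReal (c * f ((2 : ℝ)⁻¹ • x + (2 : ℝ)⁻¹ • x₀)) :=
        setLIntegral_le_lintegral _ _
    _ = ENNReal.ofReal c * ∫⁻ x, ENNReal.ofReal (f ((2 : ℝ)⁻¹ • x + (2 : ℝ)⁻¹ • x₀)) := by
        simp_rw [ENNReal.ofReal_mul (show 0 ≤ c from sqrt_nonneg _)]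
        exact lintegral_const_mul' _ _ ENNReal.ofReal_ne_top
    _ = ENNReal.ofReal (2 ^ n * c) * ∫⁻ x, ENNReal.ofReal (f x) := by
        rw [volume.lintegral_comp_smul_add (fun y => ENNReal.ofReal (f y)) (by norm_num),
          finrank_euclideanSpace_fin, ← mul_assoc, ← ENNReal.ofReal_mul (sqrt_nonneg _), inv_pow,
          inv_inv, abs_of_pos (by positivity), mul_comm c]

end LogConcaveDensity

/-- Effective support of log-concave measures (Proposition 5.1 with explicit constants):
μ{f ≥ e^(-8n)·‖f‖} ≥ 1 - 5^(-n). -/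
theorem statement13 (n : ℕ)
    (μ : Measure (EuclideanSpace ℝ (Fin n))) [IsProbabilityMeasure μ]
    (f : EuclideanSpace ℝ (Fin n) → ℝ)
    (hμ : μ = volume.withDensity (fun x => ENNReal.ofReal (f x)))
    (hf : LogConcaveDensity f) :
    1 - (1 / 5 : ℝ≥0∞) ^ n ≤
      μ {x | Real.exp (-(8 * n)) * densSup f ≤ f x} := by
  rcases Nat.eq_zero_or_pos n with rfl | hn
  · simp
  set r := exp (-(8 * n)) * densSup f
  rcases le_or_gt (densSup f) 0 with hM | hM
  · have : {x | r ≤ f x} = univ :=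
      eq_univ_of_forall fun x => (mul_nonpos_of_nonneg_of_nonpos (exp_nonneg _) hM).trans (hf.1 x)
    simp [this]
  obtain ⟨x₀, hx₀⟩ := exists_lt_of_lt_densSup (half_pos hM).le (half_lt_self hM)
  have hmass : ∫⁻ x, ENNReal.ofReal (f x) = 1 := by
    simpa [hμ] using measure_univ (μ := μ)
  have hratio : r / f x₀ ≤ 2 * exp (-(8 * n)) := by
    rw [div_le_iff₀ (by linarith), mul_comm 2, mul_assoc]
    exact mul_le_mul_of_nonneg_left (by linarith) (exp_nonneg _)
  have hlow : μ {x | r ≤ f x}ᶜ ≤ (1 / 5) ^ n :=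
    calc μ {x | r ≤ f x}ᶜ ≤ ENNReal.ofReal (2 ^ n * √(r / f x₀)) := by
          simpa [hμ, hmass] using
            hf.withDensity_compl_setOf_le_le (r := r) (by linarith) (by positivity)
      _ ≤ ENNReal.ofReal (2 ^ n * √(2 * exp (-(8 * n)))) := by gcongr
      _ ≤ ENNReal.ofReal ((1 / 5) ^ n) :=
          ENNReal.ofReal_le_ofReal (two_pow_mul_sqrt_two_mul_exp_le hn)
      _ = (1 / 5) ^ n := by
          rw [ENNReal.ofReal_pow (by norm_num), one_div, ENNReal.ofReal_inv_of_pos (by norm_num),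
            ENNReal.ofReal_ofNat, one_div]
  rw [tsub_le_iff_right]
  calc 1 = μ univ := measure_univ.symm
    _ ≤ μ {x | r ≤ f x} + μ {x | r ≤ f x}ᶜ := measure_univ_le_add_compl _
    _ ≤ μ {x | r ≤ f x} + (1 / 5) ^ n := by gcongr
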